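/- Let G=(W,E) be a finite simple graph with E nonempty, let k ≥ 2 be a natural number, and fix an orientation (x_e, y_e) of each edge e ∈ E. Construct the parliamentary election whose running parties are p_1, o_1, and one party s_w for each vertex w ∈ W, and whose voters are: for each edge e ∈ E, one voter ranking s_{x_e} ≻ s_{y_e} ≻ p_1 ≻ o_1 ≻ (all remaining parties in some fixed order); |E| voters ranking p_1 ≻ o_1 ≻ (all remaining parties); and |E| + k(k−1)/2 voters ranking o_1 first (then all remaining parties). Let the coalition be C = {p_1} ∪ {s_w : w ∈ W} and let the electoral threshold be τ = (|E| + k(k−1)/2) / (3|E| + k(k−1)/2), so a party is active iff it receives at least |E| + k(k−1)/2 votes. Then G contains a k-clique if and only if there exists a set P⁻ ⊆ C with |P⁻| ≤ k such that, in the election obtained by deleting the parties of P⁻, the active-vote fraction of C ∖ P⁻ is at least 1/2. -/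

import Mathlib

open scoped Classical

section Defs

variable {U V : Type*}

/-- `p` is the most-preferred member of the running set `P` under the linear order `L`
(greater means more preferred). -/
def TopOf (L : LinearOrder U) (P : Finset U) (p : U) : Prop :=
  p ∈ P ∧ ∀ q ∈ P, q ≠ p → L.lt q p

/-- Number of voters whose most-preferred running party lies in `A`. -/
noncomputable def votes [Fintype V] (pref : V → LinearOrder U) (P A : Finset U) : ℕ :=
  (Finset.univ.filter fun v : V => ∃ p ∈ A, TopOf (pref v) P p).card

/-- Fraction of voters whose most-preferred running party lies in `A`. -/
noncomputable def voteFrac [Fintype V] (pref : V → LinearOrder U) (P A : Finset U) : ℚ :=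
  (votes pref P A : ℚ) / (Fintype.card V : ℚ)

/-- Total number of votes received by active parties (receiving at least `T` votes) among `A`. -/
noncomputable def activeVotes [Fintype V] (pref : V → LinearOrder U) (P : Finset U) (T : ℕ)
    (A : Finset U) : ℕ :=
  ∑ p ∈ A, if T ≤ votes pref P {p} then votes pref P {p} else 0

/-- Active-vote fraction of `A`. -/
noncomputable def activeFrac [Fintype V] (pref : V → LinearOrder U) (P : Finset U) (T : ℕ)
    (A : Finset U) : ℚ :=
  (activeVotes pref P T A : ℚ) / (activeVotes pref P T P : ℚ)

/-- The linear order `L` respects the tier function `t` (smaller tier = more preferred). -/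
def PrefTiers (L : LinearOrder U) (t : U → ℕ) : Prop :=
  ∀ a b : U, t a < t b → L.lt b a

/-- Pairs `(p, q)` with `p ≻ q` under `L` and `q ≻ p` under `L'`. -/
noncomputable def invPairs [Fintype U] (L L' : LinearOrder U) : Finset (U × U) :=
  Finset.univ.filter fun pq : U × U => L.lt pq.2 pq.1 ∧ L'.lt pq.1 pq.2

/-- Swap-bribery cost of replacing `L` by `L'` with swap-price function `sw`. -/
noncomputable def swapCost [Fintype U] (L L' : LinearOrder U) (sw : U → U → ℝ) : ℝ :=
  ∑ pq ∈ invPairs L L', sw pq.1 pq.2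

end Defs

/-!
The vertex parties `s_w` never reach the threshold (each gets at most `|E|` votes), while the
opponent `o₁` always does, with exactly `|E| + k(k-1)/2` votes as long as `p₁` runs. Hence the
coalition reaches half of the active votes iff `p₁` survives and collects at least that many
votes. After deleting the vertex parties of `D`, `p₁` gets `|E|` votes plus one for every edge
with both endpoints in `D`; and a set of at most `k` vertices spanning `k(k-1)/2` edges is a
`k`-clique.
-/

open Finset

section Voting

variable {U V : Type*}

theorem TopOf.unique {L : LinearOrder U} {P : Finset U} {p q : U}
    (hp : TopOf L P p) (hq : TopOf L P q) : p = q := by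
  let _ := L
  by_contra h
  exact lt_asymm (hq.2 p hp.1 h) (hp.2 q hq.1 (Ne.symm h))

theorem PrefTiers.topOf {L : LinearOrder U} {t : U → ℕ} (ht : PrefTiers L t) {P : Finset U}
    {p : U} (hp : p ∈ P) (hmin : ∀ q ∈ P, q ≠ p → t p < t q) : TopOf L P p :=
  ⟨hp, fun q hq hne => ht _ _ (hmin q hq hne)⟩

theorem PrefTiers.not_topOf {L : LinearOrder U} {t : U → ℕ} (ht : PrefTiers L t)
    {P : Finset U} {p q : U} (hq : q ∈ P) (hlt : t q < t p) : ¬ TopOf L P p := fun hp =>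
  letI := L
  lt_asymm (ht _ _ hlt) (hp.2 q hq (by rintro rfl; exact lt_irrefl _ hlt))

theorem votes_sum_voters {V₁ V₂ : Type*} [Fintype V₁] [Fintype V₂]
    (pref : V₁ ⊕ V₂ → LinearOrder U) (P A : Finset U) :
    votes pref P A = votes (fun v => pref (.inl v)) P A + votes (fun v => pref (.inr v)) P A := by
  simp only [votes, card_filter, Fintype.sum_sum_type]

variable [Fintype V] (pref : V → LinearOrder U) (P : Finset U)

theorem votes_singleton (p : U) :
    votes pref P {p} = #{v | TopOf (pref v) P p} := by
  simp [votes]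

variable {pref P}

theorem votes_singleton_eq_card {p : U} (h : ∀ v, TopOf (pref v) P p) :
    votes pref P {p} = Fintype.card V := by
  simp [votes_singleton, h]

theorem votes_singleton_eq_zero {p : U} (h : ∀ v, ¬ TopOf (pref v) P p) :
    votes pref P {p} = 0 := by
  simp [votes_singleton, h]

theorem votes_le_card (A : Finset U) : votes pref P A ≤ Fintype.card V :=
  card_filter_le _ _

theorem votes_singleton_of_notMem {p : U} (hp : p ∉ P) : votes pref P {p} = 0 :=
  votes_singleton_eq_zero fun _ h => hp h.1

variable (pref P) in
theorem activeVotes_eq_sum_singleton (T : ℕ) (A : Finset U) :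
    activeVotes pref P T A = ∑ p ∈ A, activeVotes pref P T {p} := by
  simp [activeVotes]

theorem activeVotes_singleton_of_lt {T : ℕ} {p : U} (h : votes pref P {p} < T) :
    activeVotes pref P T {p} = 0 := by
  simp [activeVotes, h.not_ge]

theorem activeVotes_singleton_of_le {T : ℕ} {p : U} (h : T ≤ votes pref P {p}) :
    activeVotes pref P T {p} = votes pref P {p} := by
  simp [activeVotes, h]

theorem le_activeVotes_singleton_iff {T : ℕ} (hT : 0 < T) {p : U} :
    T ≤ activeVotes pref P T {p} ↔ T ≤ votes pref P {p} := by
  simp only [activeVotes, sum_singleton]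
  split_ifs <;> omega

theorem activeVotes_sdiff [DecidableEq U] {D : Finset U} (hD : Disjoint D P) (T : ℕ)
    (A : Finset U) :
    activeVotes pref P T (A \ D) = activeVotes pref P T A := by
  refine sum_subset sdiff_subset fun p _ hp => ?_
  have hpD : p ∈ D := by simp_all
  simp [votes_singleton_of_notMem (disjoint_left.mp hD hpD)]

end Voting

theorem one_half_le_div_add_iff {K : Type*} [Field K] [LinearOrder K] [IsStrictOrderedRing K]
    {a b : K} (ha : 0 ≤ a) (hb : 0 < b) :
    1 / 2 ≤ a / (a + b) ↔ b ≤ a := by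
  rw [le_div_iff₀ (by positivity)]
  constructor <;> intro h <;> linarith

theorem Nat.choose_two_lt_choose_two {m n : ℕ} (hn : 2 ≤ n) (h : m < n) :
    m.choose 2 < n.choose 2 := by
  obtain ⟨n, rfl⟩ : ∃ l, n = l + 1 := ⟨n - 1, by omega⟩
  have hsucc : (n + 1).choose 2 = n.choose 2 + n := by
    rw [Nat.choose_succ_succ', Nat.choose_one_right, add_comm]
  have := Nat.choose_le_choose 2 (Nat.le_of_lt_succ h)
  omega

namespace SimpleGraph

variable {V : Type*} [Fintype V] [DecidableEq V] (G : SimpleGraph V) [DecidableRel G.Adj]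

theorem eq_top_of_card_choose_two_le_card_edgeFinset
    (h : (Fintype.card V).choose 2 ≤ #G.edgeFinset) : G = ⊤ := by
  rw [← card_edgeFinset_top_eq_card_choose_two] at h
  exact edgeFinset_inj.mp (eq_of_subset_of_card_le (edgeFinset_mono le_top) h)

theorem card_edgeFinset_inter_sym2 (s : Finset V) :
    #(G.edgeFinset ∩ s.sym2) = #(G.induce (s : Set V)).edgeFinset := by
  rw [← filter_edgeFinset_toFinset_subset, card_filter_edgeFinset_toFinset_subset]

theorem card_edgeFinset_inter_sym2_le (s : Finset V) :
    #(G.edgeFinset ∩ s.sym2) ≤ (#s).choose 2 := by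
  rw [card_edgeFinset_inter_sym2, ← Fintype.card_coe s]
  exact card_edgeFinset_le_card_choose_two

theorem isClique_iff_choose_two_le_card_edgeFinset_inter_sym2 {s : Finset V} :
    G.IsClique (s : Set V) ↔ (#s).choose 2 ≤ #(G.edgeFinset ∩ s.sym2) := by
  have hcard : Fintype.card (s : Set V) = #s := by simp
  rw [← induce_eq_top, card_edgeFinset_inter_sym2, ← hcard]
  constructor
  · intro h
    have htop :
        #(G.induce (s : Set V)).edgeFinset = #(⊤ : SimpleGraph (s : Set V)).edgeFinset := by
      congr!
    rw [htop, card_edgeFinset_top_eq_card_choose_two]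
  · exact eq_top_of_card_choose_two_le_card_edgeFinset _

theorem card_filter_mem_mem_eq_card_inter_sym2 {x y : Sym2 V → V}
    (hxy : ∀ e ∈ G.edgeFinset, e = s(x e, y e)) (s : Finset V) :
    #{e : G.edgeFinset | x e ∈ s ∧ y e ∈ s} = #(G.edgeFinset ∩ s.sym2) := by
  calc #{e : G.edgeFinset | x e ∈ s ∧ y e ∈ s}
      = #{e : G.edgeFinset | (e : Sym2 V) ∈ s.sym2} := by
        congr 1
        refine filter_congr fun e _ => ?_
        rw [hxy e e.2, mk_mem_sym2_iff, ← hxy e e.2]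
    _ = #(G.edgeFinset ∩ s.sym2) := by
        rw [univ_eq_attach, filter_attach (· ∈ s.sym2), card_map, card_attach,
          filter_mem_eq_inter]

theorem exists_card_eq_isClique_iff {k : ℕ} (hk : 2 ≤ k) :
    (∃ K : Finset V, #K = k ∧ G.IsClique (K : Set V)) ↔
      ∃ s : Finset V, #s ≤ k ∧ k.choose 2 ≤ #(G.edgeFinset ∩ s.sym2) := by
  constructor
  · rintro ⟨K, rfl, hK⟩
    exact ⟨K, le_rfl, G.isClique_iff_choose_two_le_card_edgeFinset_inter_sym2.mp hK⟩
  · rintro ⟨s, hsk, hs⟩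
    have hchoose : k.choose 2 ≤ (#s).choose 2 := hs.trans (G.card_edgeFinset_inter_sym2_le s)
    have hsk' : #s = k := le_antisymm hsk <| not_lt.mp fun hlt =>
      (Nat.choose_two_lt_choose_two hk hlt).not_ge hchoose
    exact ⟨s, hsk', G.isClique_iff_choose_two_le_card_edgeFinset_inter_sym2.mpr (hsk' ▸ hs)⟩

end SimpleGraph

-- The party `Sum.inl w` is the vertex party `s_w`, `Sum.inr 0` is `p₁` and `Sum.inr 1` is `o₁`.
section Election

variable {W : Type*} {L : LinearOrder (W ⊕ Fin 2)} {P : Finset (W ⊕ Fin 2)}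

def coalitionVoterTier : W ⊕ Fin 2 → ℕ :=
  Sum.elim (fun _ => 2) (fun j : Fin 2 => if j = 0 then 0 else 1)

def opponentVoterTier : W ⊕ Fin 2 → ℕ :=
  Sum.elim (fun _ => 1) (fun j : Fin 2 => if j = 1 then 0 else 1)

theorem topOf_inr_zero_of_coalitionVoterTier (hL : PrefTiers L coalitionVoterTier)
    (hp : .inr 0 ∈ P) : TopOf L P (.inr 0) := by
  refine hL.topOf hp ?_
  rintro (w | j) _ hne
  · simp [coalitionVoterTier]
  · fin_cases j
    · exact absurd rfl hne
    · simp [coalitionVoterTier]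

theorem not_topOf_inl_of_coalitionVoterTier (hL : PrefTiers L coalitionVoterTier)
    (ho : .inr 1 ∈ P) (w : W) : ¬ TopOf L P (.inl w) :=
  hL.not_topOf ho (by simp [coalitionVoterTier])

theorem topOf_inr_one_of_opponentVoterTier (hL : PrefTiers L opponentVoterTier)
    (ho : .inr 1 ∈ P) : TopOf L P (.inr 1) := by
  refine hL.topOf ho ?_
  rintro (w | j) _ hne
  · simp [opponentVoterTier]
  · fin_cases j
    · simp [opponentVoterTier]
    · exact absurd rfl hne

variable [DecidableEq W]

def edgeVoterTier (u v : W) : W ⊕ Fin 2 → ℕ :=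
  Sum.elim (fun w => if w = u then 0 else if w = v then 1 else 4)
    (fun j : Fin 2 => if j = 0 then 2 else 3)

theorem topOf_inr_zero_iff_of_edgeVoterTier {u v : W}
    (hL : PrefTiers L (edgeVoterTier u v)) (hp : .inr 0 ∈ P) :
    TopOf L P (.inr 0) ↔ .inl u ∉ P ∧ .inl v ∉ P := by
  refine ⟨fun htop => ⟨fun hu => ?_, fun hv => ?_⟩, fun ⟨hu, hv⟩ => hL.topOf hp ?_⟩
  · exact hL.not_topOf hu (by simp [edgeVoterTier]) htop
  · refine hL.not_topOf hv ?_ htop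
    simp only [edgeVoterTier, Sum.elim_inl, Sum.elim_inr]
    split_ifs <;> simp
  · rintro (w | j) hq hne
    · have hwu : w ≠ u := by rintro rfl; exact hu hq
      have hwv : w ≠ v := by rintro rfl; exact hv hq
      simp [edgeVoterTier, hwu, hwv]
    · fin_cases j
      · exact absurd rfl hne
      · simp [edgeVoterTier]

theorem not_topOf_inr_one_of_edgeVoterTier {u v : W}
    (hL : PrefTiers L (edgeVoterTier u v)) (hp : .inr 0 ∈ P) : ¬ TopOf L P (.inr 1) :=
  hL.not_topOf hp (by simp [edgeVoterTier])

end Election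

section CliqueElection

variable {W ι β γ : Type*} [DecidableEq W] [Fintype ι] [Fintype β] [Fintype γ]

structure IsCliqueElection (a b : ι → W)
    (pref : ι ⊕ (β ⊕ γ) → LinearOrder (W ⊕ Fin 2)) : Prop where
  edge : ∀ i, PrefTiers (pref (.inl i)) (edgeVoterTier (a i) (b i))
  coalition : ∀ j, PrefTiers (pref (.inr (.inl j))) coalitionVoterTier
  opponent : ∀ j, PrefTiers (pref (.inr (.inr j))) opponentVoterTier

namespace IsCliqueElection

variable {a b : ι → W} {pref : ι ⊕ (β ⊕ γ) → LinearOrder (W ⊕ Fin 2)}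
  {P : Finset (W ⊕ Fin 2)}

theorem votes_inl_le (h : IsCliqueElection a b pref) (ho : .inr 1 ∈ P) (w : W) :
    votes pref P {.inl w} ≤ Fintype.card ι := by
  rw [votes_sum_voters, votes_sum_voters,
    votes_singleton_eq_zero fun j => not_topOf_inl_of_coalitionVoterTier (h.coalition j) ho w,
    votes_singleton_eq_zero fun j hw =>
      Sum.inl_ne_inr (hw.unique (topOf_inr_one_of_opponentVoterTier (h.opponent j) ho))]
  exact votes_le_card _

theorem votes_inr_zero (h : IsCliqueElection a b pref) (hp : .inr 0 ∈ P)
    (ho : .inr 1 ∈ P) :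
    votes pref P {.inr 0} = Fintype.card β + #{i | .inl (a i) ∉ P ∧ .inl (b i) ∉ P} := by
  rw [votes_sum_voters, votes_sum_voters,
    votes_singleton_eq_card fun j => topOf_inr_zero_of_coalitionVoterTier (h.coalition j) hp,
    votes_singleton_eq_zero fun (j : γ) hp' => absurd
      (hp'.unique (topOf_inr_one_of_opponentVoterTier (h.opponent j) ho)) (by simp),
    votes_singleton]
  simp_rw [topOf_inr_zero_iff_of_edgeVoterTier (h.edge _) hp]
  omega

theorem votes_inr_one (h : IsCliqueElection a b pref) (hp : .inr 0 ∈ P)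
    (ho : .inr 1 ∈ P) :
    votes pref P {.inr 1} = Fintype.card γ := by
  rw [votes_sum_voters, votes_sum_voters,
    votes_singleton_eq_zero fun i => not_topOf_inr_one_of_edgeVoterTier (h.edge i) hp,
    votes_singleton_eq_zero fun (j : β) ho' => absurd
      (ho'.unique (topOf_inr_zero_of_coalitionVoterTier (h.coalition j) hp)) (by simp),
    votes_singleton_eq_card fun j => topOf_inr_one_of_opponentVoterTier (h.opponent j) ho]
  simp

theorem half_le_activeFrac_iff [Fintype W] (h : IsCliqueElection a b pref)
    {Pm : Finset (W ⊕ Fin 2)} (hPm : Pm ⊆ insert (.inr 0) (univ.image .inl)) {T : ℕ}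
    (hγ : Fintype.card γ = T) (hι : Fintype.card ι < T) :
    1 / 2 ≤ activeFrac pref (univ \ Pm) T (insert (.inr 0) (univ.image .inl) \ Pm) ↔
      .inr 0 ∉ Pm ∧ T ≤ Fintype.card β + #{i | a i ∈ Pm.toLeft ∧ b i ∈ Pm.toLeft} := by
  have hD : Disjoint Pm (univ \ Pm) := disjoint_sdiff
  have ho : .inr 1 ∈ univ \ Pm := by
    simpa using fun h1 => by simpa using hPm h1
  have hinl (w : W) : activeVotes pref (univ \ Pm) T {.inl w} = 0 :=
    activeVotes_singleton_of_lt ((h.votes_inl_le ho w).trans_lt hι)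
  have hnum : activeVotes pref (univ \ Pm) T (insert (.inr 0) (univ.image .inl) \ Pm) =
      activeVotes pref (univ \ Pm) T {.inr 0} := by
    rw [activeVotes_sdiff hD, activeVotes_eq_sum_singleton, sum_insert (by simp),
      sum_image Sum.inl_injective.injOn]
    simp [hinl]
  have hden : activeVotes pref (univ \ Pm) T (univ \ Pm) =
      activeVotes pref (univ \ Pm) T {.inr 0} + activeVotes pref (univ \ Pm) T {.inr 1} := by
    rw [activeVotes_sdiff hD, activeVotes_eq_sum_singleton, Fintype.sum_sum_type,
      Fin.sum_univ_two]
    simp [hinl]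
  have hT : 0 < T := (Nat.zero_le _).trans_lt hι
  rw [activeFrac, hnum, hden, Nat.cast_add]
  by_cases hp : .inr 0 ∈ Pm
  · have hp0 : votes pref (univ \ Pm) {.inr 0} = 0 :=
      votes_singleton_of_notMem (by simpa using hp)
    simp [activeVotes_singleton_of_lt (hp0.trans_lt hT), hp]
  · have hp' : .inr 0 ∈ univ \ Pm := by simpa using hp
    have ho1 : activeVotes pref (univ \ Pm) T {.inr 1} = T := by
      rw [activeVotes_singleton_of_le] <;> rw [h.votes_inr_one hp' ho, hγ]
    rw [ho1, one_half_le_div_add_iff (by positivity) (by exact_mod_cast hT), Nat.cast_le,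
      le_activeVotes_singleton_iff hT, h.votes_inr_zero hp' ho]
    simp [hp]

end IsCliqueElection
end CliqueElection

theorem dcp_J_threshold_clique_reduction_general
    {W : Type*} [Fintype W] [DecidableEq W]
    (G : SimpleGraph W) [DecidableRel G.Adj]
    (k : ℕ) (hk : 2 ≤ k)
    (x y : Sym2 W → W) (hxy : ∀ e ∈ G.edgeFinset, e = s(x e, y e))
    (pref : (↥G.edgeFinset ⊕ (↥G.edgeFinset ⊕ Fin (G.edgeFinset.card + k * (k - 1) / 2))) →
      LinearOrder (W ⊕ Fin 2))
    (hprefA : ∀ e : ↥G.edgeFinset, PrefTiers (pref (Sum.inl e))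
      (Sum.elim (fun w => if w = x ↑e then (0 : ℕ) else if w = y ↑e then 1 else 4)
        (fun j : Fin 2 => if j = 0 then 2 else 3)))
    (hprefB : ∀ e : ↥G.edgeFinset, PrefTiers (pref (Sum.inr (Sum.inl e)))
      (Sum.elim (fun _ => (2 : ℕ)) (fun j : Fin 2 => if j = 0 then 0 else 1)))
    (hprefC : ∀ i : Fin (G.edgeFinset.card + k * (k - 1) / 2),
      PrefTiers (pref (Sum.inr (Sum.inr i)))
        (Sum.elim (fun _ => (1 : ℕ)) (fun j : Fin 2 => if j = 1 then 0 else 1))) :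
    (∃ K : Finset W, K.card = k ∧ G.IsClique (K : Set W)) ↔
    (∃ Pm : Finset (W ⊕ Fin 2),
      Pm ⊆ insert (Sum.inr 0) (Finset.univ.image Sum.inl) ∧ Pm.card ≤ k ∧
      (1 : ℚ) / 2 ≤
        activeFrac pref (Finset.univ \ Pm) (G.edgeFinset.card + k * (k - 1) / 2)
          (insert (Sum.inr 0) (Finset.univ.image Sum.inl) \ Pm)) := by
  have h : IsCliqueElection (fun e : G.edgeFinset => x e) (fun e => y e) pref :=
    ⟨hprefA, hprefB, hprefC⟩
  have hq : 0 < k * (k - 1) / 2 := Nat.choose_two_right k ▸ Nat.choose_pos hk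
  have key (Pm : Finset (W ⊕ Fin 2)) (hPm : Pm ⊆ insert (.inr 0) (univ.image .inl)) :
      (1 : ℚ) / 2 ≤ activeFrac pref (univ \ Pm) (#G.edgeFinset + k * (k - 1) / 2)
          (insert (.inr 0) (univ.image .inl) \ Pm) ↔
        .inr 0 ∉ Pm ∧ k.choose 2 ≤ #(G.edgeFinset ∩ Pm.toLeft.sym2) := by
    rw [h.half_le_activeFrac_iff hPm (Fintype.card_fin _)
      (by rw [Fintype.card_coe]; omega), Fintype.card_coe,
      G.card_filter_mem_mem_eq_card_inter_sym2 hxy, Nat.choose_two_right, Nat.add_le_add_iff_left]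
  rw [G.exists_card_eq_isClique_iff hk]
  constructor
  · rintro ⟨s, hs, hedges⟩
    have hsub : s.disjSum (∅ : Finset (Fin 2)) ⊆ insert (.inr 0) (univ.image .inl) := by
      intro p hp
      obtain ⟨w, -, rfl⟩ | ⟨j, hj, -⟩ := mem_disjSum.mp hp
      · simp
      · simp at hj
    exact ⟨_, hsub, by simpa, (key _ hsub).mpr ⟨by simp, by rwa [toLeft_disjSum]⟩⟩
  · rintro ⟨Pm, hPm, hcard, hfrac⟩
    exact ⟨Pm.toLeft, card_toLeft_le.trans hcard, ((key Pm hPm).mp hfrac).2⟩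

/-- Election (deleting coalition parties, J objective, threshold
$τ = (|E|+k(k-1)/2)/(3|E|+k(k-1)/2)$, i.e. active iff at least $|E|+k(k-1)/2$ votes):
parties are $p_1$ (= `Sum.inr 0`), $o_1$ (= `Sum.inr 1`), one party $s_w$ per vertex;
voters: one per edge $e$ ranking $s_{x_e} ≻ s_{y_e} ≻ p_1 ≻ o_1 ≻$ rest, $|E|$ voters
ranking $p_1 ≻ o_1 ≻$ rest, and $|E|+k(k-1)/2$ voters ranking $o_1$ first.  The coalition
is $C = \{p_1\} ∪ \{s_w\}$.  Then $G$ has a $k$-clique iff at most $k$ coalition parties can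
be deleted so that the coalition's active-vote fraction is at least $1/2$. -/
theorem dcp_J_threshold_clique_reduction
    {W : Type*} [Fintype W] [DecidableEq W]
    (G : SimpleGraph W) [DecidableRel G.Adj] (hE : G.edgeFinset.Nonempty)
    (k : ℕ) (hk : 2 ≤ k)
    (x y : Sym2 W → W) (hxy : ∀ e ∈ G.edgeFinset, e = s(x e, y e))
    (pref : (↥G.edgeFinset ⊕ (↥G.edgeFinset ⊕ Fin (G.edgeFinset.card + k * (k - 1) / 2))) →
      LinearOrder (W ⊕ Fin 2))
    (hprefA : ∀ e : ↥G.edgeFinset, PrefTiers (pref (Sum.inl e))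
      (Sum.elim (fun w => if w = x ↑e then (0 : ℕ) else if w = y ↑e then 1 else 4)
        (fun j : Fin 2 => if j = 0 then 2 else 3)))
    (hprefB : ∀ e : ↥G.edgeFinset, PrefTiers (pref (Sum.inr (Sum.inl e)))
      (Sum.elim (fun _ => (2 : ℕ)) (fun j : Fin 2 => if j = 0 then 0 else 1)))
    (hprefC : ∀ i : Fin (G.edgeFinset.card + k * (k - 1) / 2),
      PrefTiers (pref (Sum.inr (Sum.inr i)))
        (Sum.elim (fun _ => (1 : ℕ)) (fun j : Fin 2 => if j = 1 then 0 else 1))) :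
    (∃ K : Finset W, K.card = k ∧ G.IsClique (K : Set W)) ↔
    (∃ Pm : Finset (W ⊕ Fin 2),
      Pm ⊆ insert (Sum.inr 0) (Finset.univ.image Sum.inl) ∧ Pm.card ≤ k ∧
      (1 : ℚ) / 2 ≤
        activeFrac pref (Finset.univ \ Pm) (G.edgeFinset.card + k * (k - 1) / 2)
          (insert (Sum.inr 0) (Finset.univ.image Sum.inl) \ Pm)) :=
  dcp_J_threshold_clique_reduction_general G k hk x y hxy pref hprefA hprefB hprefC
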